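/- arXiv:1108.5236 — 6 statements merged into one kernel-verified Lean document; each statement's English description precedes it below -/
import Mathlib

section
/- For all real $s \geq 1$, $1 < \frac{\sqrt{s}\,\Gamma(s - 1/2)}{\Gamma(s)} \leq \sqrt{\pi}$. -/
/-!
Put `g x = x Γ(x - 1/2)² / Γ(x)²`, the square of the ratio in question. Log-convexity of `Γ` at the
midpoints `x = ((x - 1/2) + (x + 1/2)) / 2` and `x - 1/2 = ((x - 1) + x) / 2` squeezes
`x / (x - 1/2) ≤ g x ≤ x / (x - 1)`, which gives the lower bound and `g x → 1`. The functional
equation gives `g x = R x · g (x + 1)` with `R x = x³ / ((x - 1/2)² (x + 1))` decreasing, so iterating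
`n` times and letting `n → ∞` shows that `g` is decreasing on `(1/2, ∞)`; hence `g s ≤ g 1 = π`.
-/

open Real Filter Set Topology

noncomputable def gammaRatioSq (x : ℝ) : ℝ := x * Gamma (x - 1/2) ^ 2 / Gamma x ^ 2

noncomputable def gammaRatioSqStep (x : ℝ) : ℝ := x ^ 3 / ((x - 1/2) ^ 2 * (x + 1))

lemma Real.Gamma_midpoint_sq_le {a b : ℝ} (ha : 0 < a) (hb : 0 < b) :
    Gamma ((a + b) / 2) ^ 2 ≤ Gamma a * Gamma b := by
  have h := Gamma_mul_add_mul_le_rpow_Gamma_mul_rpow_Gamma ha hb one_half_pos one_half_pos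
    (add_halves 1)
  rw [← sqrt_eq_rpow, ← sqrt_eq_rpow, ← sqrt_mul (Gamma_pos_of_pos ha).le,
    show 1/2 * a + 1/2 * b = (a + b) / 2 by ring] at h
  exact (le_sqrt (Gamma_pos_of_pos (by positivity)).le
    (mul_pos (Gamma_pos_of_pos ha) (Gamma_pos_of_pos hb)).le).1 h

lemma Real.Gamma_add_half {x : ℝ} (hx : 1/2 < x) :
    Gamma (x + 1/2) = (x - 1/2) * Gamma (x - 1/2) := by
  rw [← Gamma_add_one (by linarith : x - 1/2 ≠ 0)]
  ring_nf

lemma gammaRatioSq_pos {x : ℝ} (hx : 1/2 < x) : 0 < gammaRatioSq x := by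
  have hx0 : 0 < x := by linarith
  have := Gamma_pos_of_pos (show 0 < x - 1/2 by linarith)
  have := Gamma_pos_of_pos hx0
  unfold gammaRatioSq
  positivity

lemma div_sub_half_le_gammaRatioSq {x : ℝ} (hx : 1/2 < x) : x / (x - 1/2) ≤ gammaRatioSq x := by
  have hx' : 0 < x - 1/2 := by linarith
  have h := Gamma_midpoint_sq_le hx' (by linarith : 0 < x + 1/2)
  rw [show ((x - 1/2) + (x + 1/2)) / 2 = x by ring, Gamma_add_half hx] at h
  have := Gamma_pos_of_pos (show 0 < x by linarith)
  rw [gammaRatioSq, div_le_div_iff₀ hx' (by positivity)]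
  nlinarith [Gamma_pos_of_pos hx']

lemma gammaRatioSq_le_div_sub_one {x : ℝ} (hx : 1 < x) : gammaRatioSq x ≤ x / (x - 1) := by
  have hx' : 0 < x - 1 := by linarith
  have h := Gamma_midpoint_sq_le hx' (by linarith : 0 < x)
  rw [show ((x - 1) + x) / 2 = x - 1/2 by ring] at h
  have hrec : Gamma x = (x - 1) * Gamma (x - 1) := by
    rw [← Gamma_add_one hx'.ne', sub_add_cancel]
  have := Gamma_pos_of_pos (show 0 < x by linarith)
  have := Gamma_pos_of_pos hx'
  rw [gammaRatioSq, div_le_div_iff₀ (by positivity) hx']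
  rw [hrec] at h ⊢
  nlinarith [mul_le_mul_of_nonneg_left h (show 0 ≤ x * (x - 1) by positivity)]

lemma tendsto_div_sub_atTop_one (c : ℝ) : Tendsto (fun x : ℝ => x / (x - c)) atTop (𝓝 1) := by
  have h : Tendsto (fun x : ℝ => 1 + c / (x - c)) atTop (𝓝 (1 + 0)) :=
    tendsto_const_nhds.add
      (tendsto_const_nhds.div_atTop (tendsto_atTop_add_const_right _ (-c) tendsto_id))
  rw [add_zero] at h
  refine h.congr' ?_
  filter_upwards [eventually_gt_atTop c] with x hx
  field_simp [show x - c ≠ 0 by linarith]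
  ring

lemma tendsto_gammaRatioSq_atTop : Tendsto gammaRatioSq atTop (𝓝 1) := by
  refine tendsto_of_tendsto_of_tendsto_of_le_of_le'
    (tendsto_div_sub_atTop_one (1/2)) (tendsto_div_sub_atTop_one 1) ?_ ?_
  · filter_upwards [eventually_gt_atTop (1/2)] with x hx
    exact div_sub_half_le_gammaRatioSq hx
  · filter_upwards [eventually_gt_atTop 1] with x hx
    exact gammaRatioSq_le_div_sub_one hx

lemma gammaRatioSqStep_pos {x : ℝ} (hx : 1/2 < x) : 0 < gammaRatioSqStep x := by
  have : 0 < x - 1/2 := by linarith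
  have : 0 < x := by linarith
  unfold gammaRatioSqStep
  positivity

lemma gammaRatioSq_eq_step_mul {x : ℝ} (hx : 1/2 < x) :
    gammaRatioSq x = gammaRatioSqStep x * gammaRatioSq (x + 1) := by
  have hx0 : 0 < x := by linarith
  have := Gamma_pos_of_pos hx0
  rw [gammaRatioSq, gammaRatioSq, gammaRatioSqStep, Gamma_add_one hx0.ne',
    show x + 1 - 1/2 = x + 1/2 by ring, Gamma_add_half hx, div_mul_div_comm,
    div_eq_div_iff (by positivity) (by positivity)]
  ring

lemma gammaRatioSqStep_antitoneOn : AntitoneOn gammaRatioSqStep (Ioi (1/2)) := by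
  intro a ha b hb hab
  rw [mem_Ioi] at ha hb
  rw [gammaRatioSqStep, gammaRatioSqStep,
    div_le_div_iff₀ (by nlinarith) (by nlinarith), ← sub_nonneg]
  have hfactor : a ^ 3 * ((b - 1/2) ^ 2 * (b + 1)) - b ^ 3 * ((a - 1/2) ^ 2 * (a + 1)) =
      (b - a) * (3 * a * b * (a + b) - (a ^ 2 + a * b + b ^ 2)) / 4 := by ring
  rw [hfactor]
  have : a ^ 2 + a * b + b ^ 2 ≤ 3 * a * b * (a + b) := by nlinarith [sq_nonneg (a - b)]
  have : 0 ≤ b - a := by linarith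
  positivity

lemma gammaRatioSq_mul_add_nat_le {a b : ℝ} (ha : 1/2 < a) (hab : a ≤ b) (n : ℕ) :
    gammaRatioSq b * gammaRatioSq (a + n) ≤ gammaRatioSq a * gammaRatioSq (b + n) := by
  induction n with
  | zero => simp [mul_comm]
  | succ n ih =>
    have han : 1/2 < a + n := by have := n.cast_nonneg (α := ℝ); linarith
    have hbn : 1/2 < b + n := by linarith
    rw [gammaRatioSq_eq_step_mul han, gammaRatioSq_eq_step_mul hbn] at ih
    have hstep := gammaRatioSqStep_antitoneOn han hbn (by linarith)
    have hpos := gammaRatioSqStep_pos han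
    have hg' := (gammaRatioSq_pos (x := b + n + 1) (by linarith)).le
    have hga := (gammaRatioSq_pos ha).le
    push_cast
    rw [← add_assoc, ← add_assoc]
    refine le_of_mul_le_mul_left ?_ hpos
    calc gammaRatioSqStep (a + n) * (gammaRatioSq b * gammaRatioSq (a + n + 1))
        ≤ gammaRatioSq a * (gammaRatioSqStep (b + n) * gammaRatioSq (b + n + 1)) := by
          linarith
      _ ≤ gammaRatioSq a * (gammaRatioSqStep (a + n) * gammaRatioSq (b + n + 1)) := by
          gcongr
      _ = _ := by ring

lemma gammaRatioSq_antitoneOn : AntitoneOn gammaRatioSq (Ioi (1/2)) := by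
  intro a ha b _ hab
  have hlim (c : ℝ) : Tendsto (fun n : ℕ => gammaRatioSq (c + n)) atTop (𝓝 1) :=
    tendsto_gammaRatioSq_atTop.comp
      (tendsto_atTop_add_const_left _ c tendsto_natCast_atTop_atTop)
  simpa using le_of_tendsto_of_tendsto' ((hlim a).const_mul (gammaRatioSq b))
    ((hlim b).const_mul (gammaRatioSq a)) (gammaRatioSq_mul_add_nat_le ha hab)

lemma gammaRatioSq_one : gammaRatioSq 1 = π := by
  norm_num [gammaRatioSq, Gamma_one_half_eq, sq_sqrt pi_pos.le]

theorem gamma_ratio_bounds (s : ℝ) (hs : 1 ≤ s) :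
    1 < Real.sqrt s * Real.Gamma (s - 1/2) / Real.Gamma s ∧
      Real.sqrt s * Real.Gamma (s - 1/2) / Real.Gamma s ≤ Real.sqrt π := by
  have hs0 : 0 < s := by linarith
  have hratio : Real.sqrt s * Gamma (s - 1/2) / Gamma s = Real.sqrt (gammaRatioSq s) := by
    rw [gammaRatioSq, sqrt_div' _ (sq_nonneg _), sqrt_mul hs0.le,
      sqrt_sq (Gamma_pos_of_pos (by linarith)).le, sqrt_sq (Gamma_pos_of_pos hs0).le]
  have hlower : 1 < gammaRatioSq s :=
    ((one_lt_div (by linarith)).2 (by linarith)).trans_le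
      (div_sub_half_le_gammaRatioSq (by linarith))
  have hupper : gammaRatioSq s ≤ π :=
    gammaRatioSq_one ▸ gammaRatioSq_antitoneOn (by norm_num) (mem_Ioi.2 (by linarith)) hs
  rw [hratio]
  exact ⟨sqrt_one ▸ sqrt_lt_sqrt zero_le_one hlower, sqrt_le_sqrt hupper⟩
end

section
/- Let $W = \sum_{i=1}^n X_i$ where $X_1,\dots,X_n$ are (not necessarily independent) Bernoulli random variables, and suppose $b^2 := \mathbb{E}[W^2] > 0$. For each pair $(j,k)$ with $\mathbb{P}(X_j = X_k = 1) > 0$, let $W^{(j,k)}$ be a random variable with the conditional distribution of $W$ given $X_j = X_k = 1$, and let $(J,K)$ be an independent random pair with $\mathbb{P}(J=j, K=k) = \mathbb{E}[X_j X_k]/b^2$. Then $W'' := W^{(J,K)}$ satisfies $\mathbb{E}[f(W'')] = \mathbb{E}[W^2 f(W)]/b^2$ for every bounded function $f$. -/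
/-!
Conditioning on the independent index `(J, K)`,
`E f(W'') = ∑_{j,k} P(J = j, K = k) E f(W^{(j,k)}) = ∑_{j,k} P(X_j = X_k = 1) E[f(W) | X_j = X_k = 1] / b²`,
and `P(A) E[f(W) | A] = E[1_A f(W)]` with `1_{X_j = X_k = 1} = X_j X_k`, so the sum is
`E[(∑_{j,k} X_j X_k) f(W)] / b² = E[W² f(W)] / b²`.
-/

open MeasureTheory ProbabilityTheory

section RandomIndex

variable {Ω ι : Type*} [MeasurableSpace Ω] [Fintype ι] [MeasurableSpace ι]
  [MeasurableSingletonClass ι] {μ : Measure Ω}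

theorem integral_eval_randomIndex_of_indepFun {I : Ω → ι} {Z : Ω → ι → ℝ} (hI : Measurable I)
    (hindep : IndepFun I Z μ) (hZ : ∀ i, Integrable (fun ω => Z ω i) μ) :
    ∫ ω, Z ω (I ω) ∂μ = ∑ i, μ.real (I ⁻¹' {i}) * ∫ ω, Z ω i ∂μ := by
  have hdecomp : ∀ ω, Z ω (I ω) = ∑ i, (I ⁻¹' {i}).indicator 1 ω * Z ω i := fun ω => by
    rw [Finset.sum_eq_single (I ω) (fun i _ hi => by simp [Ne.symm hi]) (by simp)]
    simp
  have hmeas : ∀ i, Measurable ((I ⁻¹' {i}).indicator (1 : Ω → ℝ)) := fun i =>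
    measurable_one.indicator (hI (measurableSet_singleton i))
  have hterm : ∀ i, ∫ ω, (I ⁻¹' {i}).indicator 1 ω * Z ω i ∂μ
      = μ.real (I ⁻¹' {i}) * ∫ ω, Z ω i ∂μ := fun i => by
    have hindep_i : IndepFun ((I ⁻¹' {i}).indicator (1 : Ω → ℝ)) (fun ω => Z ω i) μ :=
      hindep.comp (measurable_one.indicator (measurableSet_singleton i)) (measurable_pi_apply i)
    rw [hindep_i.integral_fun_mul_eq_mul_integral (hmeas i).aestronglyMeasurable
      (hZ i).aestronglyMeasurable, integral_indicator_one (hI (measurableSet_singleton i))]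
  have hint : ∀ i, Integrable (fun ω => (I ⁻¹' {i}).indicator 1 ω * Z ω i) μ := fun i =>
    (hZ i).bdd_mul (c := 1) (hmeas i).aestronglyMeasurable
      (ae_of_all _ fun ω => by by_cases h : I ω = i <;> simp [h])
  simp_rw [hdecomp]
  rw [integral_finsetSum _ fun i _ => hint i]
  exact Finset.sum_congr rfl fun i _ => hterm i

end RandomIndex

section ZeroOne

variable {Ω : Type*} [MeasurableSpace Ω] {μ : Measure Ω}

omit [MeasurableSpace Ω] in
theorem mul_mul_eq_indicator_of_zero_or_one {X Y : Ω → ℝ} (hX : ∀ ω, X ω = 0 ∨ X ω = 1)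
    (hY : ∀ ω, Y ω = 0 ∨ Y ω = 1) (g : Ω → ℝ) (ω : Ω) :
    X ω * Y ω * g ω = {ω | X ω = 1 ∧ Y ω = 1}.indicator g ω := by
  rcases hX ω with hx | hx <;> rcases hY ω with hy | hy <;> simp [hx, hy]

theorem measurableSet_eq_one_and_eq_one {X Y : Ω → ℝ} (hX : Measurable X) (hY : Measurable Y) :
    MeasurableSet {ω | X ω = 1 ∧ Y ω = 1} :=
  (hX (measurableSet_singleton 1)).inter (hY (measurableSet_singleton 1))

theorem integral_mul_of_zero_or_one {X Y : Ω → ℝ} (hXm : Measurable X) (hYm : Measurable Y)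
    (hX : ∀ ω, X ω = 0 ∨ X ω = 1) (hY : ∀ ω, Y ω = 0 ∨ Y ω = 1) :
    ∫ ω, X ω * Y ω ∂μ = μ.real {ω | X ω = 1 ∧ Y ω = 1} := by
  have hind : ∀ ω, X ω * Y ω = {ω | X ω = 1 ∧ Y ω = 1}.indicator 1 ω := fun ω => by
    simpa using mul_mul_eq_indicator_of_zero_or_one hX hY 1 ω
  rw [integral_congr_ae (ae_of_all _ hind),
    integral_indicator_one (measurableSet_eq_one_and_eq_one hXm hYm)]

theorem integral_sq_sum_mul_of_zero_or_one {ι : Type*} [Fintype ι] {X : ι → Ω → ℝ}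
    (hXm : ∀ i, Measurable (X i)) (hX : ∀ i ω, X i ω = 0 ∨ X i ω = 1) {g : Ω → ℝ}
    (hg : Integrable g μ) :
    ∫ ω, (∑ i, X i ω) ^ 2 * g ω ∂μ
      = ∑ p : ι × ι, ∫ ω in {ω | X p.1 ω = 1 ∧ X p.2 ω = 1}, g ω ∂μ := by
  have hA : ∀ p : ι × ι, MeasurableSet {ω | X p.1 ω = 1 ∧ X p.2 ω = 1} := fun p =>
    measurableSet_eq_one_and_eq_one (hXm p.1) (hXm p.2)
  have hexpand : ∀ ω, (∑ i, X i ω) ^ 2 * g ω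
      = ∑ p : ι × ι, {ω | X p.1 ω = 1 ∧ X p.2 ω = 1}.indicator g ω := fun ω => by
    simp_rw [← mul_mul_eq_indicator_of_zero_or_one (hX _) (hX _), ← Finset.sum_mul,
      Fintype.sum_prod_type, ← Fintype.sum_mul_sum, sq]
  simp_rw [hexpand]
  rw [integral_finsetSum _ fun p _ => hg.indicator (hA p)]
  simp_rw [integral_indicator (hA _)]

end ZeroOne

section Conditioning

variable {Ω Ω' β : Type*} [MeasurableSpace Ω] [MeasurableSpace Ω'] [MeasurableSpace β]
  {μ : Measure Ω} [IsFiniteMeasure μ]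

theorem measureReal_mul_integral_cond (s : Set Ω) (g : Ω → ℝ) :
    μ.real s * ∫ ω, g ω ∂μ[|s] = ∫ ω in s, g ω ∂μ := by
  by_cases hs : μ s = 0
  · simp [measureReal_def, hs, Measure.restrict_eq_zero.mpr hs]
  · rw [ProbabilityTheory.cond, integral_smul_measure, ENNReal.toReal_inv, smul_eq_mul,
      ← mul_assoc, measureReal_def,
      mul_inv_cancel₀ (ENNReal.toReal_ne_zero.mpr ⟨hs, measure_ne_top μ s⟩), one_mul]

theorem measureReal_mul_integral_comp_eq_setIntegral {ν : Measure Ω'} {s : Set Ω}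
    {V : Ω' → β} {W : Ω → β} (hV : Measurable V) (hW : Measurable W)
    (hlaw : 0 < μ s → ν.map V = μ[|s].map W) {f : β → ℝ} (hf : Measurable f) :
    μ.real s * ∫ ω', f (V ω') ∂ν = ∫ ω in s, f (W ω) ∂μ := by
  rcases eq_zero_or_pos (μ s) with hnull | hpos
  · simp [measureReal_def, hnull, setIntegral_measure_zero _ hnull]
  · have hident : IdentDistrib V W ν μ[|s] := ⟨hV.aemeasurable, hW.aemeasurable, hlaw hpos⟩
    rw [← measureReal_mul_integral_cond]
    exact congrArg (μ.real s * ·) (hident.comp hf).integral_eq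

end Conditioning

theorem double_size_bias_construction_general {Ω Ω' : Type*} [MeasurableSpace Ω]
    [MeasurableSpace Ω'] (P : Measure Ω) [IsProbabilityMeasure P]
    (Q : Measure Ω') [IsProbabilityMeasure Q]
    (n : ℕ) (X : Fin n → Ω → ℝ) (hXm : ∀ i, Measurable (X i))
    (hXval : ∀ i ω, X i ω = 0 ∨ X i ω = 1)
    (W : Ω → ℝ) (hW : W = fun ω => ∑ i, X i ω)
    (b2 : ℝ) (hb2pos : 0 < b2)
    (Wjk : Fin n → Fin n → Ω' → ℝ) (hWjkm : ∀ j k, Measurable (Wjk j k))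
    (hWjklaw : ∀ j k, 0 < P {ω | X j ω = 1 ∧ X k ω = 1} →
      Measure.map (Wjk j k) Q =
        Measure.map W (ProbabilityTheory.cond P {ω | X j ω = 1 ∧ X k ω = 1}))
    (JK : Ω' → Fin n × Fin n) (hJKm : Measurable JK)
    (hJKlaw : ∀ j k, Q {ω' | JK ω' = (j, k)} =
      ENNReal.ofReal ((∫ ω, X j ω * X k ω ∂P) / b2))
    (hindep : IndepFun JK (fun ω' (p : Fin n × Fin n) => Wjk p.1 p.2 ω') Q)
    (f : ℝ → ℝ) (hfm : Measurable f) (hfb : ∃ C, ∀ x, |f x| ≤ C) :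
    ∫ ω', f (Wjk (JK ω').1 (JK ω').2 ω') ∂Q =
      (∫ ω, (W ω)^2 * f (W ω) ∂P) / b2 := by
  obtain ⟨C, hC⟩ := hfb
  have hWm : Measurable W := hW ▸ Finset.measurable_sum _ fun i _ => hXm i
  have hfW : Integrable (fun ω => f (W ω)) P :=
    .of_bound (hfm.comp hWm).aestronglyMeasurable C (ae_of_all _ fun _ => hC _)
  have hfWjk : ∀ p : Fin n × Fin n, Integrable (fun ω' => f (Wjk p.1 p.2 ω')) Q := fun p =>
    .of_bound (hfm.comp (hWjkm p.1 p.2)).aestronglyMeasurable C (ae_of_all _ fun _ => hC _)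
  have hindep' : IndepFun JK (fun ω' (p : Fin n × Fin n) => f (Wjk p.1 p.2 ω')) Q :=
    hindep.comp (ψ := fun (φ : Fin n × Fin n → ℝ) p => f (φ p)) measurable_id (by fun_prop)
  have hJKlaw' : ∀ j k, Q.real (JK ⁻¹' {(j, k)}) = P.real {ω | X j ω = 1 ∧ X k ω = 1} / b2 :=
    fun j k => by
      rw [measureReal_def, show JK ⁻¹' {(j, k)} = {ω' | JK ω' = (j, k)} from rfl, hJKlaw,
        integral_mul_of_zero_or_one (hXm j) (hXm k) (hXval j) (hXval k),
        ENNReal.toReal_ofReal (by positivity)]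
  calc ∫ ω', f (Wjk (JK ω').1 (JK ω').2 ω') ∂Q
      = ∑ p, Q.real (JK ⁻¹' {p}) * ∫ ω', f (Wjk p.1 p.2 ω') ∂Q :=
        integral_eval_randomIndex_of_indepFun hJKm hindep' hfWjk
    _ = ∑ p : Fin n × Fin n, (∫ ω in {ω | X p.1 ω = 1 ∧ X p.2 ω = 1}, f (W ω) ∂P) / b2 :=
        Finset.sum_congr rfl fun ⟨j, k⟩ _ => by
          rw [hJKlaw', div_mul_eq_mul_div, measureReal_mul_integral_comp_eq_setIntegral
            (hWjkm j k) hWm (hWjklaw j k) hfm]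
    _ = (∫ ω, (W ω)^2 * f (W ω) ∂P) / b2 := by
        subst hW
        rw [integral_sq_sum_mul_of_zero_or_one hXm hXval hfW, Finset.sum_div]

theorem double_size_bias_construction {Ω Ω' : Type*} [MeasurableSpace Ω]
    [MeasurableSpace Ω'] (P : Measure Ω) [IsProbabilityMeasure P]
    (Q : Measure Ω') [IsProbabilityMeasure Q]
    (n : ℕ) (X : Fin n → Ω → ℝ) (hXm : ∀ i, Measurable (X i))
    (hXval : ∀ i ω, X i ω = 0 ∨ X i ω = 1)
    (W : Ω → ℝ) (hW : W = fun ω => ∑ i, X i ω)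
    (b2 : ℝ) (hb2 : b2 = ∫ ω, (W ω)^2 ∂P) (hb2pos : 0 < b2)
    (Wjk : Fin n → Fin n → Ω' → ℝ) (hWjkm : ∀ j k, Measurable (Wjk j k))
    (hWjklaw : ∀ j k, 0 < P {ω | X j ω = 1 ∧ X k ω = 1} →
      Measure.map (Wjk j k) Q =
        Measure.map W (ProbabilityTheory.cond P {ω | X j ω = 1 ∧ X k ω = 1}))
    (JK : Ω' → Fin n × Fin n) (hJKm : Measurable JK)
    (hJKlaw : ∀ j k, Q {ω' | JK ω' = (j, k)} =
      ENNReal.ofReal ((∫ ω, X j ω * X k ω ∂P) / b2))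
    (hindep : IndepFun JK (fun ω' (p : Fin n × Fin n) => Wjk p.1 p.2 ω') Q)
    (f : ℝ → ℝ) (hfm : Measurable f) (hfb : ∃ C, ∀ x, |f x| ≤ C) :
    ∫ ω', f (Wjk (JK ω').1 (JK ω').2 ω') ∂Q =
      (∫ ω, (W ω)^2 * f (W ω) ∂P) / b2 :=
  double_size_bias_construction_general P Q n X hXm hXval W hW b2 hb2pos Wjk hWjkm hWjklaw JK hJKm
    hJKlaw hindep f hfm hfb
end

section
/- Let $\mu$ be a probability measure on $\mathbb{R}$ with a density $f$ satisfying $f(x) > \varepsilon > 0$ for all $x$ in some nonempty open interval $(a,b)$. Let $(X_n)$ be a sequence of integer-valued random variables and $(a_n)$ a sequence of positive reals tending to $0$. Then there exists $c > 0$ such that for all $n$, the Kolmogorov distance $\sup_x |\mathbb{P}(a_n X_n \leq x) - \mu((-\infty,x])| \geq c\, a_n$. -/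
open Real MeasureTheory Filter

lemma klb_core {Ω : Type*} [MeasurableSpace Ω]
    (P : Measure Ω) [IsProbabilityMeasure P]
    (μ : Measure ℝ) [IsProbabilityMeasure μ] (f : ℝ → ℝ)
    (hμ : μ = volume.withDensity (fun x => ENNReal.ofReal (f x)))
    (a b ε : ℝ) (hε : 0 < ε)
    (hf : ∀ x ∈ Set.Ioo a b, ε < f x)
    (Y : Ω → ℤ) (t : ℝ) (ht : 0 < t)
    (x y : ℝ) (hax : a < x) (hxy : x ≤ y) (hyb : y < b)
    (hfl : ⌊x / t⌋ = ⌊y / t⌋) :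
    ε * (y - x) ≤
      2 * ⨆ z : ℝ, |(P {ω | t * (Y ω : ℝ) ≤ z}).toReal - (μ (Set.Iic z)).toReal| := by
  set F : ℝ → ℝ := fun z => (P {ω | t * (Y ω : ℝ) ≤ z}).toReal with hF
  set G : ℝ → ℝ := fun z => (μ (Set.Iic z)).toReal with hG
  have hset : ∀ z : ℝ, {ω | t * (Y ω : ℝ) ≤ z} = {ω | Y ω ≤ ⌊z / t⌋} := by
    intro z
    ext ω
    simp only [Set.mem_setOf_eq, Int.le_floor]
    rw [le_div_iff₀ ht, mul_comm]
  have hFxy : F x = F y := by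
    simp only [hF, hset, hfl]
  have hbdd : ∀ z : ℝ, |F z - G z| ≤ 2 := by
    intro z
    have h1 : F z ≤ 1 := ENNReal.toReal_mono ENNReal.one_ne_top prob_le_one
    have h2 : G z ≤ 1 := ENNReal.toReal_mono ENNReal.one_ne_top prob_le_one
    have h3 : 0 ≤ F z := ENNReal.toReal_nonneg
    have h4 : 0 ≤ G z := ENNReal.toReal_nonneg
    rw [abs_sub_le_iff]
    constructor <;> linarith
  have hBdd : BddAbove (Set.range fun z : ℝ => |F z - G z|) := by
    refine ⟨2, ?_⟩
    rintro _ ⟨z, rfl⟩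
    exact hbdd z
  have hle : ∀ z : ℝ, |F z - G z| ≤ ⨆ w : ℝ, |F w - G w| := fun z => le_ciSup hBdd z
  have hμIoc : ENNReal.ofReal (ε * (y - x)) ≤ μ (Set.Ioc x y) := by
    rw [hμ, withDensity_apply _ measurableSet_Ioc]
    have hmono : ∫⁻ z in Set.Ioc x y, ENNReal.ofReal ε ≤
        ∫⁻ z in Set.Ioc x y, ENNReal.ofReal (f z) := by
      apply setLIntegral_mono' measurableSet_Ioc
      intro z hz
      exact ENNReal.ofReal_le_ofReal
        (le_of_lt (hf z ⟨lt_trans hax hz.1, lt_of_le_of_lt hz.2 hyb⟩))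
    refine le_trans (le_of_eq ?_) hmono
    rw [setLIntegral_const, Real.volume_Ioc, ← ENNReal.ofReal_mul (le_of_lt hε)]
  have hGle : ε * (y - x) ≤ G y - G x := by
    have hunion : Set.Iic x ∪ Set.Ioc x y = Set.Iic y := Set.Iic_union_Ioc_eq_Iic hxy
    have hdisj : Disjoint (Set.Iic x) (Set.Ioc x y) := Set.Iic_disjoint_Ioc le_rfl
    have hadd : μ (Set.Iic y) = μ (Set.Iic x) + μ (Set.Ioc x y) := by
      rw [← hunion, measure_union hdisj measurableSet_Ioc]
    have hGsub : G y - G x = (μ (Set.Ioc x y)).toReal := by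
      simp only [hG, hadd, ENNReal.toReal_add (measure_ne_top μ _) (measure_ne_top μ _)]
      ring
    rw [hGsub]
    calc ε * (y - x) = (ENNReal.ofReal (ε * (y - x))).toReal := by
          rw [ENNReal.toReal_ofReal (by nlinarith)]
      _ ≤ (μ (Set.Ioc x y)).toReal := ENNReal.toReal_mono (measure_ne_top μ _) hμIoc
  have h1 := hle x
  have h2 := hle y
  have hxabs : G y - G x ≤ |F x - G x| + |F y - G y| := by
    rw [hFxy]
    have ha : G y - G x ≤ |F y - G x| + |F y - G y| := by
      have hb : F y - G x ≤ |F y - G x| := le_abs_self _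
      have hc : -(F y - G y) ≤ |F y - G y| := neg_le_abs _
      linarith
    exact ha
  linarith

theorem kolmogorov_lower_bound_lattice {Ω : Type*} [MeasurableSpace Ω]
    (P : Measure Ω) [IsProbabilityMeasure P]
    (μ : Measure ℝ) [IsProbabilityMeasure μ] (f : ℝ → ℝ)
    (hμ : μ = volume.withDensity (fun x => ENNReal.ofReal (f x)))
    (a b ε : ℝ) (hab : a < b) (hε : 0 < ε)
    (hf : ∀ x ∈ Set.Ioo a b, ε < f x)
    (X : ℕ → Ω → ℤ) (hXm : ∀ n, Measurable (X n))
    (an : ℕ → ℝ) (han : ∀ n, 0 < an n) (hlim : Tendsto an atTop (nhds 0)) :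
    ∃ c > 0, ∀ n, c * an n ≤
      ⨆ x : ℝ, |(P {ω | an n * (X n ω : ℝ) ≤ x}).toReal - (μ (Set.Iic x)).toReal| := by
  set S : ℕ → ℝ := fun n =>
    ⨆ x : ℝ, |(P {ω | an n * (X n ω : ℝ) ≤ x}).toReal - (μ (Set.Iic x)).toReal| with hS
  have hSpos : ∀ n, 0 < S n := by
    intro n
    set t := an n with hat
    have ht : 0 < t := han n
    set m : ℝ := (a + b) / 2 with hm
    set k : ℤ := ⌊m / t⌋ with hk
    have ham : a < m := by rw [hm]; linarith
    have hmb : m < b := by rw [hm]; linarith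
    have htk : t * k ≤ m := by
      have h := Int.floor_le (m / t)
      calc t * (k : ℝ) ≤ t * (m / t) :=
            mul_le_mul_of_nonneg_left h (le_of_lt ht)
        _ = m := by field_simp
    have hmk1 : m < t * ((k : ℝ) + 1) := by
      have h := Int.lt_floor_add_one (m / t)
      calc m = t * (m / t) := by field_simp
        _ < t * ((k : ℝ) + 1) := by
            apply mul_lt_mul_of_pos_left _ ht
            exact_mod_cast h
    set u : ℝ := min (t * ((k : ℝ) + 1)) b with hu
    have hmu : m < u := lt_min hmk1 hmb
    set y : ℝ := (m + u) / 2 with hy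
    have hmy : m < y := by rw [hy]; linarith
    have hyu : y < u := by rw [hy]; linarith
    have hyb : y < b := lt_of_lt_of_le hyu (min_le_right _ _)
    have hfl : ⌊m / t⌋ = ⌊y / t⌋ := by
      rw [← hk]; symm
      rw [Int.floor_eq_iff]
      constructor
      · rw [le_div_iff₀ ht]
        nlinarith
      · rw [div_lt_iff₀ ht]
        have : y < t * ((k : ℝ) + 1) := lt_of_lt_of_le hyu (min_le_left _ _)
        push_cast
        linarith
    have hcore := klb_core P μ f hμ a b ε hε hf (X n) t ht m y ham (le_of_lt hmy) hyb hfl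
    have hpos : 0 < ε * (y - m) := by nlinarith
    have : S n = ⨆ z : ℝ, |(P {ω | t * (X n ω : ℝ) ≤ z}).toReal - (μ (Set.Iic z)).toReal| := rfl
    rw [this]
    linarith
  obtain ⟨N, hN⟩ := Filter.eventually_atTop.mp
    (hlim.eventually_lt_const (show (0:ℝ) < (b - a) / 2 by linarith))
  have hbig : ∀ n, N ≤ n → ε / 4 * an n ≤ S n := by
    intro n hn
    set t := an n with hat
    have ht : 0 < t := han n
    have htsmall : t < (b - a) / 2 := hN n hn
    set k : ℤ := ⌊a / t⌋ + 1 with hk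
    set x : ℝ := t * k with hx
    set y : ℝ := t * k + t / 2 with hy
    have hak : a / t < (k : ℝ) := by
      rw [hk]; push_cast
      exact Int.lt_floor_add_one (a / t)
    have hka : (k : ℝ) ≤ a / t + 1 := by
      rw [hk]; push_cast
      have := Int.floor_le (a / t)
      linarith
    have hax : a < x := by
      rw [hx]
      calc a = t * (a / t) := by field_simp
        _ < t * k := mul_lt_mul_of_pos_left hak ht
    have hxk : x ≤ a + t := by
      rw [hx]
      calc t * (k : ℝ) ≤ t * (a / t + 1) := mul_le_mul_of_nonneg_left hka (le_of_lt ht)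
        _ = a + t := by field_simp
    have hyb : y < b := by
      rw [hy]
      have : t * (k : ℝ) + t / 2 ≤ a + t + t / 2 := by linarith
      linarith
    have hfl : ⌊x / t⌋ = ⌊y / t⌋ := by
      have hx' : x / t = (k : ℝ) := by rw [hx]; field_simp
      have hy' : y / t = (k : ℝ) + 1 / 2 := by rw [hy, div_eq_iff (ne_of_gt ht)]; ring
      rw [hx', hy']
      rw [Int.floor_intCast]
      symm
      rw [Int.floor_eq_iff]
      constructor
      · linarith
      · push_cast; linarith
    have hcore := klb_core P μ f hμ a b ε hε hf (X n) t ht x y hax (by rw [hx, hy]; linarith) hyb hfl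
    have hdiff : y - x = t / 2 := by rw [hx, hy]; ring
    rw [hdiff] at hcore
    have : S n = ⨆ z : ℝ, |(P {ω | t * (X n ω : ℝ) ≤ z}).toReal - (μ (Set.Iic z)).toReal| := rfl
    rw [this]
    linarith
  set c : ℝ := min (ε / 4) ((Finset.range (N + 1)).inf' (by simp) (fun i => S i / an i)) with hc
  refine ⟨c, ?_, ?_⟩
  · rw [hc]
    apply lt_min (by linarith)
    rw [Finset.lt_inf'_iff]
    intro i _
    exact div_pos (hSpos i) (han i)
  · intro n
    by_cases h : n < N + 1
    · have h1 : c ≤ S n / an n := le_trans (min_le_right _ _)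
        (Finset.inf'_le _ (Finset.mem_range.mpr h))
      have h2 : c * an n ≤ S n / an n * an n :=
        mul_le_mul_of_nonneg_right h1 (le_of_lt (han n))
      rwa [div_mul_cancel₀ _ (ne_of_gt (han n))] at h2
    · have hn : N ≤ n := by omega
      have h1 : c ≤ ε / 4 := min_le_left _ _
      have h2 : c * an n ≤ ε / 4 * an n :=
        mul_le_mul_of_nonneg_right h1 (le_of_lt (han n))
      exact le_trans h2 (hbig n hn)
end

section
/- In the $(2,0;1,1)$ urn process with $i \geq 1$ initial black balls and $1$ initial white ball, letting $W_n$ be the number of white balls after $n$ draws, one has $\mathbb{E}[W_n^2] = 2\,\frac{i+2n+1}{i+1} - \mathbb{E}[W_n]$, and consequently $(2 - \sqrt{\pi})\,\frac{i+2n+1}{i+1} \leq \mathbb{E}[W_n^2] \leq 2\,\frac{i+2n+1}{i+1}$. -/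
/-!
Since the number of white balls grows by one with conditional probability `W / c`,
`c = i + 2n + 1`, the rising factorial `D = W (W + 1)` satisfies
`E[D_{n+1}] = (c + 2) / c · E[D_n]`; the product telescopes to
`E[D_n] = 2 (i + 2n + 1) / (i + 1)`, and `E[W²] = E[D] - E[W]`. The two bounds then
follow from `0 ≤ E[W] ≤ E[W²]` and `1 ≤ √π`.
-/

open Real MeasureTheory Finset

lemma lt_add_two_of_unit_steps {α : Type*} {W : ℕ → α → ℕ} (h0 : ∀ ω, W 0 ω = 1)
    (hstep : ∀ n ω, W (n + 1) ω = W n ω ∨ W (n + 1) ω = W n ω + 1) (n : ℕ) (ω : α) :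
    W n ω < n + 2 := by
  induction n with
  | zero => simp [h0]
  | succ n ih => rcases hstep n ω with h | h <;> omega

lemma comp_eq_sum_indicator_of_lt {Ω : Type*} {X : Ω → ℕ} {m : ℕ} (hXm : ∀ ω, X ω < m)
    (g : ℕ → ℝ) (ω : Ω) :
    g (X ω) = ∑ w ∈ range m, {ω | X ω = w}.indicator (fun _ => g w) ω := by
  rw [sum_eq_single_of_mem (X ω) (mem_range.2 (hXm ω))]
  · exact (Set.indicator_of_mem rfl _).symm
  · exact fun w _ hw => Set.indicator_of_notMem (Ne.symm hw) _

section FiniteValued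

variable {Ω : Type*} [MeasurableSpace Ω] {μ : Measure Ω} [IsFiniteMeasure μ]
  {X : Ω → ℕ} {m : ℕ}

lemma integrable_comp_of_lt (hX : Measurable X) (hXm : ∀ ω, X ω < m) (g : ℕ → ℝ) :
    Integrable (fun ω => g (X ω)) μ := by
  simp_rw [comp_eq_sum_indicator_of_lt hXm g]
  exact integrable_finsetSum _ fun w _ =>
    (integrable_const (g w)).indicator (hX (measurableSet_singleton w))

lemma integral_comp_eq_sum_of_lt (hX : Measurable X) (hXm : ∀ ω, X ω < m) (g : ℕ → ℝ) :
    ∫ ω, g (X ω) ∂μ = ∑ w ∈ range m, g w * μ.real {ω | X ω = w} := by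
  simp_rw [comp_eq_sum_indicator_of_lt hXm g]
  have hlevel (w : ℕ) : MeasurableSet {ω | X ω = w} := hX (measurableSet_singleton w)
  rw [integral_finsetSum _ fun w _ => (integrable_const (g w)).indicator (hlevel w)]
  exact sum_congr rfl fun w _ => by
    rw [integral_indicator_const _ (hlevel w), smul_eq_mul, mul_comm]

lemma integral_mul_succ_of_step {X Y : Ω → ℕ} (hX : Measurable X) (hY : Measurable Y)
    (hXm : ∀ ω, X ω < m) (hstep : ∀ ω, Y ω = X ω ∨ Y ω = X ω + 1) {c : ℝ} (hc : 0 < c)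
    (hup : ∀ w : ℕ,
      μ {ω | Y ω = w + 1 ∧ X ω = w} = ENNReal.ofReal (w / c) * μ {ω | X ω = w}) :
    ∫ ω, (Y ω : ℝ) * (Y ω + 1) ∂μ = (c + 2) / c * ∫ ω, (X ω : ℝ) * (X ω + 1) ∂μ := by
  set up := {ω | Y ω = X ω + 1}
  have hup_meas : MeasurableSet up := measurableSet_eq_fun hY (hX.add_const 1)
  have hpt (ω : Ω) : (Y ω : ℝ) * (Y ω + 1) =
      X ω * (X ω + 1) + up.indicator (fun ω => 2 * ((X ω : ℝ) + 1)) ω := by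
    by_cases h : Y ω = X ω + 1
    · rw [Set.indicator_of_mem (s := up) h, h]; push_cast; ring
    · rw [Set.indicator_of_notMem (s := up) h, (hstep ω).resolve_right h]; ring
  have hjump : ∫ ω in up, 2 * ((X ω : ℝ) + 1) ∂μ =
      2 / c * ∫ ω, (X ω : ℝ) * (X ω + 1) ∂μ := by
    rw [integral_comp_eq_sum_of_lt hX hXm (fun w => 2 * ((w : ℝ) + 1)),
      integral_comp_eq_sum_of_lt hX hXm (fun w => (w : ℝ) * (w + 1)), mul_sum]
    refine sum_congr rfl fun w _ => ?_
    have hjoint : {ω | X ω = w} ∩ up = {ω | Y ω = w + 1 ∧ X ω = w} := by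
      ext ω; simp only [Set.mem_inter_iff, Set.mem_ofPred_eq, up]; grind
    rw [measureReal_restrict_apply (t := {ω | X ω = w}) (hX (measurableSet_singleton w)),
      hjoint, measureReal_def, hup, ENNReal.toReal_mul, ENNReal.toReal_ofReal (by positivity),
      ← measureReal_def]
    field_simp
  simp_rw [hpt]
  rw [integral_add (integrable_comp_of_lt hX hXm (fun w => (w : ℝ) * (w + 1)))
      ((integrable_comp_of_lt hX hXm (fun w => 2 * ((w : ℝ) + 1))).indicator hup_meas),
    integral_indicator hup_meas, hjump]
  field_simp

end FiniteValued

theorem urn_second_moment_general {Ω : Type*} [MeasurableSpace Ω] (P : Measure Ω)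
    [IsProbabilityMeasure P] (i : ℕ)
    (W : ℕ → Ω → ℕ) (hWm : ∀ n, Measurable (W n))
    (hW0 : ∀ ω, W 0 ω = 1)
    (hstep : ∀ n ω, W (n+1) ω = W n ω ∨ W (n+1) ω = W n ω + 1)
    (hcond : ∀ n w, P {ω | W (n+1) ω = w + 1 ∧ W n ω = w} =
      ENNReal.ofReal ((w : ℝ) / ((i:ℝ) + 2*(n:ℝ) + 1)) * P {ω | W n ω = w}) :
    ∀ n : ℕ,
      (∫ ω, (W n ω : ℝ)^2 ∂P =
        2 * (((i:ℝ) + 2*(n:ℝ) + 1) / ((i:ℝ) + 1)) - ∫ ω, (W n ω : ℝ) ∂P) ∧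
      ((2 - Real.sqrt π) * (((i:ℝ) + 2*(n:ℝ) + 1) / ((i:ℝ) + 1)) ≤
        ∫ ω, (W n ω : ℝ)^2 ∂P) ∧
      (∫ ω, (W n ω : ℝ)^2 ∂P ≤ 2 * (((i:ℝ) + 2*(n:ℝ) + 1) / ((i:ℝ) + 1))) := by
  have hbound := lt_add_two_of_unit_steps hW0 hstep
  have hrising (n : ℕ) : ∫ ω, (W n ω : ℝ) * (W n ω + 1) ∂P =
      2 * (((i : ℝ) + 2 * n + 1) / (i + 1)) := by
    induction n with
    | zero =>
      have hi : (i : ℝ) + 1 ≠ 0 := by positivity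
      simp [hW0, hi, one_add_one_eq_two]
    | succ n ih =>
      rw [integral_mul_succ_of_step (hWm n) (hWm (n + 1)) (hbound n) (hstep n) (by positivity)
        (hcond n), ih]
      push_cast
      field_simp
      ring
  intro n
  set r := ((i : ℝ) + 2 * n + 1) / (i + 1)
  have hint (g : ℕ → ℝ) := integrable_comp_of_lt (μ := P) (hWm n) (hbound n) g
  have hsecond : ∫ ω, (W n ω : ℝ) ^ 2 ∂P = 2 * r - ∫ ω, (W n ω : ℝ) ∂P := by
    rw [← hrising n, ← integral_sub (hint fun w => (w : ℝ) * (w + 1)) (hint fun w => (w : ℝ))]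
    congr 1 with ω
    ring
  have hmean_nonneg : 0 ≤ ∫ ω, (W n ω : ℝ) ∂P := integral_nonneg fun ω => by positivity
  have hmean_le : ∫ ω, (W n ω : ℝ) ∂P ≤ ∫ ω, (W n ω : ℝ) ^ 2 ∂P :=
    integral_mono (hint fun w => (w : ℝ)) (hint fun w => (w : ℝ) ^ 2) fun ω =>
      show (W n ω : ℝ) ≤ (W n ω : ℝ) ^ 2 by exact_mod_cast Nat.le_self_pow two_ne_zero (W n ω)
  have hr : 0 ≤ r := by positivity
  have hsqrt_pi : 1 ≤ √π := Real.one_le_sqrt.2 (by linarith [Real.pi_gt_three])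
  exact ⟨hsecond, by nlinarith, by linarith⟩

theorem urn_second_moment {Ω : Type*} [MeasurableSpace Ω] (P : Measure Ω)
    [IsProbabilityMeasure P] (i : ℕ) (hi : 1 ≤ i)
    (W : ℕ → Ω → ℕ) (hWm : ∀ n, Measurable (W n))
    (hW0 : ∀ ω, W 0 ω = 1)
    (hstep : ∀ n ω, W (n+1) ω = W n ω ∨ W (n+1) ω = W n ω + 1)
    (hcond : ∀ n w, P {ω | W (n+1) ω = w + 1 ∧ W n ω = w} =
      ENNReal.ofReal ((w : ℝ) / ((i:ℝ) + 2*(n:ℝ) + 1)) * P {ω | W n ω = w}) :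
    ∀ n : ℕ,
      (∫ ω, (W n ω : ℝ)^2 ∂P =
        2 * (((i:ℝ) + 2*(n:ℝ) + 1) / ((i:ℝ) + 1)) - ∫ ω, (W n ω : ℝ) ∂P) ∧
      ((2 - Real.sqrt π) * (((i:ℝ) + 2*(n:ℝ) + 1) / ((i:ℝ) + 1)) ≤
        ∫ ω, (W n ω : ℝ)^2 ∂P) ∧
      (∫ ω, (W n ω : ℝ)^2 ∂P ≤ 2 * (((i:ℝ) + 2*(n:ℝ) + 1) / ((i:ℝ) + 1))) :=
  urn_second_moment_general P i W hWm hW0 hstep hcond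
end

section
/- For all integers $n \geq 0$ and $i \geq 1$, $\frac{1}{\sqrt{\pi}}\sqrt{\frac{2n}{i+2}+1} \leq \prod_{t=1}^{n} \frac{i+2t}{i+2t-1} \leq \sqrt{\pi}\sqrt{\frac{2n}{i+2}+1}$. -/
/-!
Squaring the product makes it telescope against two elementary estimates of each squared factor:
with `c = a + 2t - 2`,
`(c + 3) / (c + 1) ≤ ((c + 2) / (c + 1)) ^ 2 ≤ (c + 2) / c`,
so `(a + 2n + 1) / (a + 1) ≤ (∏ t ∈ [1, n], (a + 2t) / (a + 2t - 1)) ^ 2 ≤ (a + 2n) / a`.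
Both ends lie within a factor `π` of `2n / (a + 2) + 1` once `a ≥ 1`.
-/

open Real

noncomputable def ratioProd (a : ℝ) (n : ℕ) : ℝ :=
  ∏ t ∈ Finset.Icc 1 n, (a + 2 * (t : ℝ)) / (a + 2 * (t : ℝ) - 1)

section ratioProd

variable {a : ℝ}

lemma ratioProd_zero (a : ℝ) : ratioProd a 0 = 1 := by
  simp [ratioProd]

lemma ratioProd_succ (a : ℝ) (n : ℕ) :
    ratioProd a (n + 1) = ratioProd a n * ((a + 2 * n + 2) / (a + 2 * n + 1)) := by
  rw [ratioProd, Finset.prod_Icc_succ_top (by omega), ← ratioProd]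
  push_cast
  ring_nf

lemma ratioProd_pos (ha : 0 < a + 1) (n : ℕ) : 0 < ratioProd a n := by
  induction n with
  | zero => simp [ratioProd_zero]
  | succ n ih =>
    rw [ratioProd_succ]
    have : (0 : ℝ) ≤ n := n.cast_nonneg
    exact mul_pos ih (div_pos (by linarith) (by linarith))

lemma div_le_sq_add_two_div_add_one {c : ℝ} (hc : 0 < c + 1) :
    (c + 3) / (c + 1) ≤ ((c + 2) / (c + 1)) ^ 2 := by
  rw [div_pow, div_le_div_iff₀ hc (by positivity)]
  nlinarith

lemma sq_add_two_div_add_one_le {c : ℝ} (hc : 0 < c) :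
    ((c + 2) / (c + 1)) ^ 2 ≤ (c + 2) / c := by
  rw [div_pow, div_le_div_iff₀ (by positivity) hc]
  nlinarith

lemma div_le_sq_ratioProd (ha : 0 < a + 1) (n : ℕ) :
    (a + 2 * n + 1) / (a + 1) ≤ ratioProd a n ^ 2 := by
  induction n with
  | zero => simp [ratioProd_zero, div_self ha.ne']
  | succ n ih =>
    have hc : 0 < a + 2 * n + 1 := by linarith [n.cast_nonneg (α := ℝ)]
    calc (a + 2 * ↑(n + 1) + 1) / (a + 1)
        = (a + 2 * n + 1) / (a + 1) * ((a + 2 * n + 3) / (a + 2 * n + 1)) := by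
          field_simp; push_cast; ring
      _ ≤ ratioProd a n ^ 2 * ((a + 2 * n + 2) / (a + 2 * n + 1)) ^ 2 := by
          exact mul_le_mul ih (div_le_sq_add_two_div_add_one hc)
            (div_pos (by linarith) hc).le (sq_nonneg _)
      _ = ratioProd a (n + 1) ^ 2 := by rw [ratioProd_succ, mul_pow]

lemma sq_ratioProd_le_div (ha : 0 < a) (n : ℕ) :
    ratioProd a n ^ 2 ≤ (a + 2 * n) / a := by
  induction n with
  | zero => simp [ratioProd_zero, div_self ha.ne']
  | succ n ih =>
    have hc : 0 < a + 2 * n := by linarith [n.cast_nonneg (α := ℝ)]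
    calc ratioProd a (n + 1) ^ 2
        = ratioProd a n ^ 2 * ((a + 2 * n + 2) / (a + 2 * n + 1)) ^ 2 := by
          rw [ratioProd_succ, mul_pow]
      _ ≤ (a + 2 * n) / a * ((a + 2 * n + 2) / (a + 2 * n)) := by
          gcongr
          exact sq_add_two_div_add_one_le hc
      _ = (a + 2 * ↑(n + 1)) / a := by
          field_simp; push_cast; ring

end ratioProd

lemma two_mul_div_add_two_add_one_le {a x : ℝ} (ha : 0 ≤ a) (hx : 0 ≤ x) :
    2 * x / (a + 2) + 1 ≤ (a + 2 * x + 1) / (a + 1) := by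
  rw [div_add_one (by positivity), div_le_div_iff₀ (by positivity) (by positivity)]
  nlinarith

lemma add_two_mul_div_le_pi_mul {a x : ℝ} (ha : 1 ≤ a) (hx : 0 ≤ x) :
    (a + 2 * x) / a ≤ π * (2 * x / (a + 2) + 1) := by
  have hπ : 3 < π := pi_gt_three
  rw [div_add_one (by positivity), mul_div_assoc', div_le_div_iff₀ (by positivity) (by positivity)]
  nlinarith [mul_nonneg (mul_nonneg hx (by linarith : (0 : ℝ) ≤ a)) (by linarith : (0 : ℝ) ≤ π - 3),
    mul_nonneg (by linarith : (0 : ℝ) ≤ a - 1) (by linarith : (0 : ℝ) ≤ π - 3)]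

theorem product_ratio_bounds (n i : ℕ) (hi : 1 ≤ i) :
    (1 / Real.sqrt π) * Real.sqrt (2*(n:ℝ) / ((i:ℝ) + 2) + 1) ≤
        (∏ t ∈ Finset.Icc 1 n, (((i:ℝ) + 2*(t:ℝ)) / ((i:ℝ) + 2*(t:ℝ) - 1))) ∧
      (∏ t ∈ Finset.Icc 1 n, (((i:ℝ) + 2*(t:ℝ)) / ((i:ℝ) + 2*(t:ℝ) - 1))) ≤
        Real.sqrt π * Real.sqrt (2*(n:ℝ) / ((i:ℝ) + 2) + 1) := by
  have ha : (1 : ℝ) ≤ i := by exact_mod_cast hi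
  have hn : (0 : ℝ) ≤ n := n.cast_nonneg
  have hP : 0 < ratioProd i n := ratioProd_pos (by linarith) n
  have hsqrtπ : 1 ≤ √π := one_le_sqrt.mpr (by linarith [pi_gt_three])
  change _ ≤ ratioProd i n ∧ ratioProd i n ≤ _
  constructor
  · calc 1 / √π * √(2 * n / (i + 2) + 1)
        ≤ √(2 * n / (i + 2) + 1) := by
          rw [one_div_mul_eq_div]
          exact div_le_self (sqrt_nonneg _) hsqrtπ
      _ ≤ ratioProd i n := by
          rw [sqrt_le_left hP.le]
          exact (two_mul_div_add_two_add_one_le (by linarith) hn).trans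
            (div_le_sq_ratioProd (by linarith) n)
  · rw [← sqrt_mul pi_pos.le, le_sqrt hP.le (by positivity)]
    exact (sq_ratioProd_le_div (by linarith) n).trans (add_two_mul_div_le_pi_mul ha hn)
end

section
/- Let $f$ be twice differentiable on $[0,\infty)$ with $f(0)=f'(0)=0$ and suppose $Z$ has density $2xe^{-x^2}$ on $(0,\infty)$ such that $\mathbb{E}|f''(Z)|$, $\mathbb{E}|Zf'(Z)|$ and $\mathbb{E}|f(Z)|$ are finite. Then $\mathbb{E}\left[\tfrac{1}{2} f''(Z) - Z f'(Z) + f(Z)\right] = 0$. -/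
/-!
Writing `κ(x) = 2x e^{-x²}` for the density on `(0, ∞)`, the product rule gives
`((x f'(x) - f(x)) e^{-x²})' = (½ f''(x) - x f'(x) + f(x)) κ(x)`.
The primitive `g(x) = (x f'(x) - f(x)) e^{-x²}` vanishes at `0` because `f(0) = 0`, and it tends to
`0` at infinity because both `g` and `g'` are integrable near infinity: `g' = (½ f'' - x f' + f) κ`
is integrable by assumption, and `g(x) = (x f'(x) κ(x) - f(x) κ(x)) / (2x)`.
Hence the expectation, which is `∫₀^∞ g'`, vanishes.
-/

open Real MeasureTheory Set Filter

section LawWithDensity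

variable {Ω α : Type*} [MeasurableSpace Ω] [MeasurableSpace α] {P : Measure Ω} {ν : Measure α}
  {Z : Ω → α} {ρ h : α → ℝ}

theorem aestronglyMeasurable_map_of_law_eq_withDensity
    (hlaw : P.map Z = ν.withDensity fun x => ENNReal.ofReal (ρ x)) (hh : AEStronglyMeasurable h ν) :
    AEStronglyMeasurable h (P.map Z) :=
  hlaw ▸ hh.mono_ac (withDensity_absolutelyContinuous _ _)

theorem integrable_mul_density_of_integrable_comp (hZ : AEMeasurable Z P) (hρ : Measurable ρ)
    (hρ0 : ∀ᵐ x ∂ν, 0 ≤ ρ x) (hlaw : P.map Z = ν.withDensity fun x => ENNReal.ofReal (ρ x))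
    (hh : AEStronglyMeasurable h ν) (hint : Integrable (fun ω => h (Z ω)) P) :
    Integrable (fun x => h x * ρ x) ν := by
  have := (integrable_map_measure (aestronglyMeasurable_map_of_law_eq_withDensity hlaw hh) hZ).2 hint
  rw [hlaw, integrable_withDensity_iff hρ.ennreal_ofReal
    (ae_of_all _ fun _ => ENNReal.ofReal_lt_top)] at this
  refine this.congr ?_
  filter_upwards [hρ0] with x hx
  rw [ENNReal.toReal_ofReal hx]

theorem integral_comp_eq_integral_mul_density (hZ : AEMeasurable Z P) (hρ : Measurable ρ)
    (hρ0 : ∀ᵐ x ∂ν, 0 ≤ ρ x) (hlaw : P.map Z = ν.withDensity fun x => ENNReal.ofReal (ρ x))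
    (hh : AEStronglyMeasurable h ν) :
    ∫ ω, h (Z ω) ∂P = ∫ x, h x * ρ x ∂ν := by
  rw [← integral_map hZ (aestronglyMeasurable_map_of_law_eq_withDensity hlaw hh), hlaw,
    integral_withDensity_eq_integral_toReal_smul hρ.ennreal_ofReal
      (ae_of_all _ fun _ => ENNReal.ofReal_lt_top)]
  refine integral_congr_ae ?_
  filter_upwards [hρ0] with x hx
  rw [ENNReal.toReal_ofReal hx, smul_eq_mul, mul_comm]

end LawWithDensity

theorem aestronglyMeasurable_restrict_of_hasDerivAt {μ : Measure ℝ} {s : Set ℝ} {f f' : ℝ → ℝ}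
    (hs : MeasurableSet s) (hf : ∀ x ∈ s, HasDerivAt f (f' x) x) :
    AEStronglyMeasurable f' (μ.restrict s) :=
  (measurable_deriv f).aestronglyMeasurable.congr <|
    (ae_restrict_iff' hs).2 <| ae_of_all _ fun x hx => (hf x hx).deriv

noncomputable section

def kHalfDensity (x : ℝ) : ℝ := 2 * x * exp (-x ^ 2)

def steinOperatorKHalf (f f' f'' : ℝ → ℝ) (x : ℝ) : ℝ := 1 / 2 * f'' x - x * f' x + f x

end

theorem withDensity_kHalf_eq_restrict :
    volume.withDensity (fun x => ENNReal.ofReal (if 0 < x then 2 * x * exp (-x ^ 2) else 0)) =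
      (volume.restrict (Ioi 0)).withDensity fun x => ENNReal.ofReal (kHalfDensity x) := by
  rw [← withDensity_indicator measurableSet_Ioi]
  congr 1
  funext x
  by_cases hx : 0 < x <;> simp [hx, kHalfDensity]

theorem hasDerivAt_steinPrimitive_kHalf {f f' f'' : ℝ → ℝ} {x : ℝ} (hf' : HasDerivAt f (f' x) x)
    (hf'' : HasDerivAt f' (f'' x) x) :
    HasDerivAt (fun y => (y * f' y - f y) * exp (-y ^ 2))
      (steinOperatorKHalf f f' f'' x * kHalfDensity x) x := by
  have hexp : HasDerivAt (fun y => exp (-y ^ 2)) (exp (-x ^ 2) * -(2 * x)) x := by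
    simpa using ((hasDerivAt_pow 2 x).neg).exp
  refine ((((hasDerivAt_id' x).fun_mul hf'').fun_sub hf').fun_mul hexp).congr_deriv ?_
  simp only [steinOperatorKHalf, kHalfDensity]
  ring

theorem integrableOn_Ioi_steinPrimitive_kHalf {f f' : ℝ → ℝ} {a : ℝ} (ha : 0 < a)
    (hf' : IntegrableOn (fun x => x * f' x * kHalfDensity x) (Ioi a))
    (hf : IntegrableOn (fun x => f x * kHalfDensity x) (Ioi a)) :
    IntegrableOn (fun x => (x * f' x - f x) * exp (-x ^ 2)) (Ioi a) := by
  have hbound : ∀ᵐ x ∂volume.restrict (Ioi a), ‖(2 * x)⁻¹‖ ≤ (2 * a)⁻¹ := by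
    filter_upwards [ae_restrict_mem measurableSet_Ioi] with x (hx : a < x)
    rw [norm_inv, Real.norm_of_nonneg (by linarith)]
    gcongr
  refine ((hf'.sub hf).bdd_mul (by fun_prop) hbound).congr ?_
  filter_upwards [ae_restrict_mem measurableSet_Ioi] with x hx
  have hx0 : x ≠ 0 := (ha.trans hx).ne'
  simp only [Pi.sub_apply, kHalfDensity]
  field_simp

theorem integral_Ioi_steinOperatorKHalf_mul_kHalfDensity {f f' f'' : ℝ → ℝ}
    (hf' : ∀ x, 0 ≤ x → HasDerivAt f (f' x) x) (hf'' : ∀ x, 0 ≤ x → HasDerivAt f' (f'' x) x)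
    (hf0 : f 0 = 0)
    (hF : IntegrableOn (fun x => steinOperatorKHalf f f' f'' x * kHalfDensity x) (Ioi 0))
    (hxf' : IntegrableOn (fun x => x * f' x * kHalfDensity x) (Ioi 0))
    (hf : IntegrableOn (fun x => f x * kHalfDensity x) (Ioi 0)) :
    ∫ x in Ioi 0, steinOperatorKHalf f f' f'' x * kHalfDensity x = 0 := by
  have hderiv x (hx : x ∈ Ici (0 : ℝ)) := hasDerivAt_steinPrimitive_kHalf (hf' x hx) (hf'' x hx)
  have hIoi : Ioi (1 : ℝ) ⊆ Ioi 0 := Ioi_subset_Ioi zero_le_one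
  have hlim := tendsto_zero_of_hasDerivAt_of_integrableOn_Ioi
    (fun x hx => hderiv x (Ioi_subset_Ici_self (hIoi hx))) (hF.mono_set hIoi)
    (integrableOn_Ioi_steinPrimitive_kHalf one_pos (hxf'.mono_set hIoi) (hf.mono_set hIoi))
  rw [integral_Ioi_of_hasDerivAt_of_tendsto' hderiv hF hlim]
  simp [hf0]

theorem stein_identity_K_half_general {Ω : Type*} [MeasurableSpace Ω] (P : Measure Ω)
    (Z : Ω → ℝ) (hZm : Measurable Z)
    (hZlaw : Measure.map Z P = volume.withDensity
      (fun x => ENNReal.ofReal (if 0 < x then 2 * x * Real.exp (-x^2) else 0)))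
    (f f' f'' : ℝ → ℝ)
    (hf' : ∀ x, 0 ≤ x → HasDerivAt f (f' x) x)
    (hf'' : ∀ x, 0 ≤ x → HasDerivAt f' (f'' x) x)
    (hf0 : f 0 = 0)
    (hint1 : Integrable (fun ω => f'' (Z ω)) P)
    (hint2 : Integrable (fun ω => Z ω * f' (Z ω)) P)
    (hint3 : Integrable (fun ω => f (Z ω)) P) :
    ∫ ω, ((1/2) * f'' (Z ω) - Z ω * f' (Z ω) + f (Z ω)) ∂P = 0 := by
  rw [withDensity_kHalf_eq_restrict] at hZlaw
  have hκ : Measurable kHalfDensity := by unfold kHalfDensity; fun_prop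
  have hκ0 : ∀ᵐ x ∂volume.restrict (Ioi 0), 0 ≤ kHalfDensity x :=
    (ae_restrict_iff' measurableSet_Ioi).2 <| ae_of_all _ fun x (hx : 0 < x) => by
      unfold kHalfDensity; positivity
  have hfm : AEStronglyMeasurable f (volume.restrict (Ioi 0)) :=
    (HasDerivAt.continuousOn fun x hx => hf' x (le_of_lt hx)).aestronglyMeasurable measurableSet_Ioi
  have hf'm : AEStronglyMeasurable f' (volume.restrict (Ioi 0)) :=
    aestronglyMeasurable_restrict_of_hasDerivAt measurableSet_Ioi fun x hx => hf' x (le_of_lt hx)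
  have hf''m : AEStronglyMeasurable f'' (volume.restrict (Ioi 0)) :=
    aestronglyMeasurable_restrict_of_hasDerivAt measurableSet_Ioi fun x hx => hf'' x (le_of_lt hx)
  have hFm : AEStronglyMeasurable (steinOperatorKHalf f f' f'') (volume.restrict (Ioi 0)) :=
    ((hf''m.const_mul _).sub (aestronglyMeasurable_id.mul hf'm)).add hfm
  have transfer {h : ℝ → ℝ} := integrable_mul_density_of_integrable_comp (h := h)
    hZm.aemeasurable hκ hκ0 hZlaw
  exact (integral_comp_eq_integral_mul_density hZm.aemeasurable hκ hκ0 hZlaw hFm).trans <|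
    integral_Ioi_steinOperatorKHalf_mul_kHalfDensity hf' hf'' hf0
      (transfer hFm (((hint1.const_mul _).sub hint2).add hint3))
      (transfer (aestronglyMeasurable_id.mul hf'm) hint2) (transfer hfm hint3)

theorem stein_identity_K_half {Ω : Type*} [MeasurableSpace Ω] (P : Measure Ω)
    [IsProbabilityMeasure P] (Z : Ω → ℝ) (hZm : Measurable Z)
    (hZlaw : Measure.map Z P = volume.withDensity
      (fun x => ENNReal.ofReal (if 0 < x then 2 * x * Real.exp (-x^2) else 0)))
    (f f' f'' : ℝ → ℝ)
    (hf' : ∀ x, 0 ≤ x → HasDerivAt f (f' x) x)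
    (hf'' : ∀ x, 0 ≤ x → HasDerivAt f' (f'' x) x)
    (hf0 : f 0 = 0) (hf'0 : f' 0 = 0)
    (hint1 : Integrable (fun ω => f'' (Z ω)) P)
    (hint2 : Integrable (fun ω => Z ω * f' (Z ω)) P)
    (hint3 : Integrable (fun ω => f (Z ω)) P) :
    ∫ ω, ((1/2) * f'' (Z ω) - Z ω * f' (Z ω) + f (Z ω)) ∂P = 0 :=
  stein_identity_K_half_general P Z hZm hZlaw f f' f'' hf' hf'' hf0 hint1 hint2 hint3
end
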